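/- The Nitsche energy defines a norm uniformly in N: for every γ > 1/2 there exists c > 0 such that for every integer N ≥ 1, every real polynomial ψ of degree at most N with ψ(−1) = 0, and every z ∈ L²(−1,1), one has (1/2)∫_{-1}^{1} z(x)² dx + (1/2)∫_{-1}^{1} ψ'(x)² dx − ψ'(1)ψ(1) + (γ/2)N²ψ(1)² ≥ c·( ∫_{-1}^{1} z(x)² dx + ∫_{-1}^{1} ψ'(x)² dx ). -/

import Mathlib

/-!
Write `t = ψ'(1)` and `s = ψ(1)`. With `c = (2γ - 1) / (4γ)`, completing the square gives
`4γN² (E - c (∫ z² + ∫ ψ'²)) = N² ∫ z² + (N² ∫ ψ'² - 2t²) + 2 (t - γN² s)²`,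
so everything rests on the sharp inverse trace inequality `q(1)² ≤ (n² / 2) ∫ q²` for
polynomials `q` of degree `< n`, applied to `q = ψ'` and `n = N`. Expanding `q` in the Legendre
polynomials `P_k`, which satisfy `P_k(1) = 1` and `∫ P_k² = 2 / (2k + 1)`, the Cauchy–Schwarz
inequality gives `q(1)² ≤ (∑_{k<n} (2k + 1) / 2) ∫ q² = (n² / 2) ∫ q²`. The constant `n² / 2` is
exactly what makes every `γ > 1/2` admissible.
-/

open Polynomial MeasureTheory

namespace Polynomial

variable {R : Type*} [CommRing R]

lemma eval_iterate_derivative_eq_zero_of_pow_dvd {p : R[X]} {a : R} {k n : ℕ}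
    (h : (X - C a) ^ n ∣ p) (hk : k < n) : (derivative^[k] p).eval a = 0 :=
  dvd_iff_isRoot.mp <| (dvd_pow_self _ (Nat.sub_ne_zero_of_lt hk)).trans
    (pow_sub_dvd_iterate_derivative_of_pow_dvd k h)

lemma X_sq_sub_one_eq_mul {a : R} (ha : a ^ 2 = 1) :
    (X : R[X]) ^ 2 - 1 = (X - C a) * (X + C a) := by
  rw [← C_1, ← ha, C_pow]
  ring

lemma eval_iterate_derivative_X_sq_sub_one_pow {a : R} (ha : a ^ 2 = 1)
    {k n : ℕ} (hk : k < n) : (derivative^[k] (((X : R[X]) ^ 2 - 1) ^ n)).eval a = 0 :=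
  eval_iterate_derivative_eq_zero_of_pow_dvd
    (by rw [X_sq_sub_one_eq_mul ha, mul_pow]; exact dvd_mul_right _ _) hk

section Nontrivial

variable [Nontrivial R]

lemma natDegree_X_sq_sub_one_pow (n : ℕ) :
    (((X : R[X]) ^ 2 - 1) ^ n).natDegree = 2 * n := by
  rw [← C_1, (monic_X_pow_sub_C (1 : R) two_ne_zero).natDegree_pow, natDegree_X_pow_sub_C,
    mul_comm]

lemma coeff_X_sq_sub_one_pow_two_mul (n : ℕ) :
    (((X : R[X]) ^ 2 - 1) ^ n).coeff (2 * n) = 1 := by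
  rw [← natDegree_X_sq_sub_one_pow (R := R) n, ← C_1]
  exact ((monic_X_pow_sub_C (1 : R) two_ne_zero).pow n).coeff_natDegree

end Nontrivial

lemma integral_eval_derivative_mul (p q : ℝ[X]) (a b : ℝ) :
    ∫ x in a..b, (derivative p).eval x * q.eval x =
      p.eval b * q.eval b - p.eval a * q.eval a -
        ∫ x in a..b, p.eval x * (derivative q).eval x := by
  have hparts := intervalIntegral.integral_deriv_mul_eq_sub (fun x _ ↦ p.hasDerivAt x)
    (fun x _ ↦ q.hasDerivAt x) ((derivative p).continuous.intervalIntegrable a b)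
    ((derivative q).continuous.intervalIntegrable a b)
  rw [intervalIntegral.integral_add (Continuous.intervalIntegrable (by fun_prop) a b)
    (Continuous.intervalIntegrable (by fun_prop) a b)] at hparts
  linarith

end Polynomial

lemma integral_sq_sum_of_orthogonal {ι : Type*} (s : Finset ι) (a : ι → ℝ)
    {f : ι → ℝ → ℝ} (hf : ∀ i, Continuous (f i)) {α β : ℝ}
    (horth : ∀ i ∈ s, ∀ j ∈ s, i ≠ j → ∫ x in α..β, f i x * f j x = 0) :
    ∫ x in α..β, (∑ i ∈ s, a i * f i x) ^ 2 = ∑ i ∈ s, a i ^ 2 * ∫ x in α..β, f i x ^ 2 := by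
  have hexpand : ∀ x, (∑ i ∈ s, a i * f i x) ^ 2 =
      ∑ i ∈ s, ∑ j ∈ s, a i * a j * (f i x * f j x) := by
    intro x
    rw [sq, Finset.sum_mul_sum]
    exact Finset.sum_congr rfl fun i _ ↦ Finset.sum_congr rfl fun j _ ↦ by ring
  simp_rw [hexpand]
  rw [intervalIntegral.integral_finsetSum
    fun i _ ↦ Continuous.intervalIntegrable (by fun_prop) _ _]
  refine Finset.sum_congr rfl fun i hi ↦ ?_
  rw [intervalIntegral.integral_finsetSum
      fun j _ ↦ Continuous.intervalIntegrable (by fun_prop) _ _,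
    Finset.sum_eq_single_of_mem i hi fun j hj hji ↦ by
      rw [intervalIntegral.integral_const_mul, horth i hi j hj hji.symm, mul_zero]]
  simp_rw [intervalIntegral.integral_const_mul, ← sq]

lemma integral_one_sub_sq_pow_succ (m : ℕ) :
    (2 * (m : ℝ) + 3) * ∫ x in (-1 : ℝ)..1, (1 - x ^ 2) ^ (m + 1) =
      (2 * (m : ℝ) + 2) * ∫ x in (-1 : ℝ)..1, (1 - x ^ 2) ^ m := by
  have hderiv : ∀ x : ℝ, HasDerivAt (fun x ↦ x * (1 - x ^ 2) ^ (m + 1))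
      ((2 * m + 3) * (1 - x ^ 2) ^ (m + 1) - (2 * m + 2) * (1 - x ^ 2) ^ m) x := by
    intro x
    refine ((hasDerivAt_id' x).fun_mul
      (((hasDerivAt_pow 2 x).const_sub 1).fun_pow (m + 1))).congr_deriv ?_
    simp only [Nat.add_sub_cancel, Nat.cast_add, Nat.cast_one, Nat.cast_ofNat]
    ring
  have hftc := intervalIntegral.integral_eq_sub_of_hasDerivAt (a := -1) (b := 1)
    (fun x _ ↦ hderiv x) (by apply Continuous.intervalIntegrable; fun_prop)
  rw [intervalIntegral.integral_sub (by apply Continuous.intervalIntegrable; fun_prop)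
    (by apply Continuous.intervalIntegrable; fun_prop), intervalIntegral.integral_const_mul,
    intervalIntegral.integral_const_mul] at hftc
  norm_num at hftc
  linarith

lemma integral_one_sub_sq_pow (n : ℕ) :
    ((2 * n + 1).factorial : ℝ) * ∫ x in (-1 : ℝ)..1, (1 - x ^ 2) ^ n =
      2 ^ (2 * n + 1) * (n.factorial : ℝ) ^ 2 := by
  induction n with
  | zero => norm_num
  | succ m ih =>
    have hrec := integral_one_sub_sq_pow_succ m
    rw [show 2 * (m + 1) + 1 = (2 * m + 1) + 1 + 1 by ring, Nat.factorial_succ (2 * m + 1 + 1),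
      Nat.factorial_succ (2 * m + 1), Nat.factorial_succ m]
    push_cast
    linear_combination
      (2 * (m : ℝ) + 2) * (2 * m + 1).factorial * hrec + (2 * (m : ℝ) + 2) ^ 2 * ih

lemma sum_range_two_mul_add_one_div_two (n : ℕ) :
    ∑ k ∈ Finset.range n, (2 * (k : ℝ) + 1) / 2 = n ^ 2 / 2 := by
  induction n with
  | zero => simp
  | succ n ih => rw [Finset.sum_range_succ, ih]; push_cast; ring

/-- Rodrigues' formula for the Legendre polynomial, without its normalising factor
`1 / (2 ^ n * n !)`. -/
noncomputable def rodrigues (n : ℕ) : ℝ[X] := derivative^[n] ((X ^ 2 - 1) ^ n)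

lemma natDegree_rodrigues_le (n : ℕ) : (rodrigues n).natDegree ≤ n := by
  have := natDegree_iterate_derivative (((X : ℝ[X]) ^ 2 - 1) ^ n) n
  rw [natDegree_X_sq_sub_one_pow] at this
  unfold rodrigues; omega

lemma coeff_rodrigues_self_ne_zero (n : ℕ) : (rodrigues n).coeff n ≠ 0 := by
  rw [rodrigues, coeff_iterate_derivative, ← two_mul, coeff_X_sq_sub_one_pow_two_mul, nsmul_one,
    Nat.cast_ne_zero, Ne, Nat.descFactorial_eq_zero_iff_lt]
  omega

lemma iterate_derivative_X_sq_sub_one_pow_two_mul (n : ℕ) :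
    derivative^[2 * n] (((X : ℝ[X]) ^ 2 - 1) ^ n) = C ((2 * n).factorial : ℝ) := by
  have hdeg := natDegree_iterate_derivative (((X : ℝ[X]) ^ 2 - 1) ^ n) (2 * n)
  rw [natDegree_X_sq_sub_one_pow, Nat.sub_self] at hdeg
  rw [eq_C_of_natDegree_le_zero hdeg, coeff_iterate_derivative, zero_add,
    coeff_X_sq_sub_one_pow_two_mul, Nat.descFactorial_self, nsmul_one]

lemma eval_one_rodrigues (n : ℕ) : (rodrigues n).eval 1 = 2 ^ n * n.factorial := by
  rw [rodrigues, X_sq_sub_one_eq_mul (one_pow 2), mul_pow, iterate_derivative_mul, eval_finsetSum,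
    Finset.sum_eq_single 0]
  · rw [Nat.sub_zero, iterate_derivative_X_sub_pow_self, Function.iterate_zero_apply]
    simp [one_add_one_eq_two, mul_comm]
  · intro k hkn hk
    rw [Finset.mem_range] at hkn
    rw [eval_smul, eval_mul, eval_iterate_derivative_eq_zero_of_pow_dvd dvd_rfl (by omega),
      zero_mul, smul_zero]
  · simp

lemma integral_rodrigues_mul (n : ℕ) (q : ℝ[X]) {k : ℕ} (hk : k ≤ n) :
    ∫ x in (-1 : ℝ)..1, (rodrigues n).eval x * q.eval x =
      (-1) ^ k * ∫ x in (-1 : ℝ)..1,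
        (derivative^[n - k] ((X ^ 2 - 1) ^ n)).eval x * (derivative^[k] q).eval x := by
  induction k with
  | zero => simp [rodrigues]
  | succ k ih =>
    rw [ih (by omega), show n - k = n - (k + 1) + 1 by omega, Function.iterate_succ_apply',
      integral_eval_derivative_mul,
      eval_iterate_derivative_X_sq_sub_one_pow (one_pow 2) (by omega),
      eval_iterate_derivative_X_sq_sub_one_pow (by norm_num) (by omega),
      ← Function.iterate_succ_apply' derivative k q]
    ring

lemma integral_rodrigues_mul_eq_zero {n : ℕ} {q : ℝ[X]} (hq : q.natDegree < n) :
    ∫ x in (-1 : ℝ)..1, (rodrigues n).eval x * q.eval x = 0 := by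
  simp [integral_rodrigues_mul n q le_rfl, iterate_derivative_eq_zero hq]

lemma integral_rodrigues_mul_rodrigues {m n : ℕ} (h : m ≠ n) :
    ∫ x in (-1 : ℝ)..1, (rodrigues m).eval x * (rodrigues n).eval x = 0 := by
  rcases h.lt_or_gt with h | h
  · simp_rw [mul_comm ((rodrigues m).eval _)]
    exact integral_rodrigues_mul_eq_zero ((natDegree_rodrigues_le m).trans_lt h)
  · exact integral_rodrigues_mul_eq_zero ((natDegree_rodrigues_le n).trans_lt h)

lemma integral_rodrigues_sq (n : ℕ) :
    ∫ x in (-1 : ℝ)..1, (rodrigues n).eval x ^ 2 =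
      (rodrigues n).eval 1 ^ 2 * (2 / (2 * n + 1)) := by
  have hparts : ∫ x in (-1 : ℝ)..1, (rodrigues n).eval x ^ 2 =
      (2 * n).factorial * ∫ x in (-1 : ℝ)..1, (1 - x ^ 2) ^ n := by
    simp_rw [sq (eval _ (rodrigues n)), integral_rodrigues_mul n _ le_rfl, rodrigues, ← Function.iterate_add_apply,
      ← two_mul, iterate_derivative_X_sq_sub_one_pow_two_mul, Nat.sub_self,
      Function.iterate_zero_apply, eval_C, ← intervalIntegral.integral_const_mul]
    refine intervalIntegral.integral_congr fun x _ ↦ ?_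
    simp only [eval_pow, eval_sub, eval_X, eval_one]
    have hsign : (x ^ 2 - 1) ^ n * (-1) ^ n = (1 - x ^ 2) ^ n := by rw [← mul_pow]; ring_nf
    linear_combination ((2 * n).factorial : ℝ) * hsign
  have hwallis := integral_one_sub_sq_pow n
  rw [Nat.factorial_succ] at hwallis
  push_cast at hwallis
  rw [hparts, eval_one_rodrigues]
  field_simp
  linear_combination hwallis

lemma exists_eq_sum_C_mul_rodrigues {n : ℕ} {p : ℝ[X]} (hp : p.degree < n) :
    ∃ a : ℕ → ℝ, p = ∑ k ∈ Finset.range n, C (a k) * rodrigues k := by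
  induction n generalizing p with
  | zero => exact ⟨0, by simpa using hp⟩
  | succ n ih =>
    set c := p.coeff n / (rodrigues n).coeff n
    obtain ⟨a, ha⟩ := ih (p := p - C c * rodrigues n) <| by
      rw [degree_lt_iff_coeff_zero] at hp ⊢
      intro m hm
      rcases hm.eq_or_lt with rfl | hm
      · simp [c, coeff_rodrigues_self_ne_zero]
      · rw [coeff_sub, coeff_C_mul, hp m (by omega),
          coeff_eq_zero_of_natDegree_lt ((natDegree_rodrigues_le n).trans_lt hm), mul_zero,
          sub_zero]
    refine ⟨Function.update a n c, ?_⟩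
    rw [Finset.sum_range_succ, Function.update_self,
      Finset.sum_congr rfl fun k hk ↦ by rw [Function.update_of_ne (Finset.mem_range.mp hk).ne],
      ← ha]
    ring

theorem sq_eval_one_le_of_degree_lt {p : ℝ[X]} {n : ℕ} (hp : p.degree < n) :
    p.eval 1 ^ 2 ≤ n ^ 2 / 2 * ∫ x in (-1 : ℝ)..1, p.eval x ^ 2 := by
  rcases n.eq_zero_or_pos with rfl | hn
  · simp [show p = 0 by simpa using hp]
  obtain ⟨a, rfl⟩ := exists_eq_sum_C_mul_rodrigues hp
  simp_rw [eval_finsetSum, eval_mul, eval_C]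
  rw [integral_sq_sum_of_orthogonal _ _ (fun k ↦ (rodrigues k).continuous)
    fun i _ j _ hij ↦ integral_rodrigues_mul_rodrigues hij]
  have hcs := Finset.sq_sum_div_le_sum_sq_div (Finset.range n)
    (fun k ↦ a k * (rodrigues k).eval 1) (g := fun k : ℕ ↦ (2 * (k : ℝ) + 1) / 2)
    fun k _ ↦ by positivity
  rw [sum_range_two_mul_add_one_div_two, div_le_iff₀ (by positivity)] at hcs
  have hnorm : ∀ k : ℕ, a k ^ 2 * ∫ x in (-1 : ℝ)..1, (rodrigues k).eval x ^ 2 =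
      (a k * (rodrigues k).eval 1) ^ 2 / ((2 * k + 1) / 2) := by
    intro k
    rw [integral_rodrigues_sq]
    field_simp
  rw [Finset.sum_congr rfl fun k _ ↦ hnorm k, mul_comm]
  exact hcs

lemma energy_lower_bound_of_trace_bound {γ ν A B t s : ℝ} (hγ : 1 / 2 < γ) (hν : 0 < ν)
    (hA : 0 ≤ A) (ht : t ^ 2 ≤ ν / 2 * B) :
    (2 * γ - 1) / (4 * γ) * (A + B) ≤ 1 / 2 * A + 1 / 2 * B - t * s + γ / 2 * ν * s ^ 2 := by
  have hγ0 : 0 < γ := by linarith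
  have hsos : 4 * γ * ν * (1 / 2 * A + 1 / 2 * B - t * s + γ / 2 * ν * s ^ 2 -
      (2 * γ - 1) / (4 * γ) * (A + B)) =
        ν * A + (ν * B - 2 * t ^ 2) + 2 * (t - γ * ν * s) ^ 2 := by
    field_simp
    ring
  have hsos_nonneg : 0 ≤ ν * A + (ν * B - 2 * t ^ 2) + 2 * (t - γ * ν * s) ^ 2 := by
    have hνA := mul_nonneg hν.le hA
    have hsq := sq_nonneg (t - γ * ν * s)
    linarith
  rw [← hsos] at hsos_nonneg
  exact sub_nonneg.mp (nonneg_of_mul_nonneg_right hsos_nonneg (by positivity))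

/-- The Nitsche energy defines a norm, uniformly in `N`: for every `γ > 1/2`
there is `c > 0` such that for every `N ≥ 1`, every polynomial `ψ` of degree at
most `N` with `ψ(−1) = 0`, and every `z ∈ L²(−1,1)`,
`E_{N,γ}(ψ,z) ≥ c·(∫z² + ∫ψ'²)`. -/
theorem nitsche_energy_uniform_norm :
    ∀ γ : ℝ, 1 / 2 < γ → ∃ c > 0, ∀ N : ℕ, 1 ≤ N →
      ∀ ψ : Polynomial ℝ, ψ.degree ≤ N → ψ.eval (-1) = 0 →
        ∀ z : ℝ → ℝ, MemLp z 2 (volume.restrict (Set.Ioo (-1 : ℝ) 1)) →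
          (1 / 2) * (∫ x in (-1 : ℝ)..1, (z x) ^ 2)
              + (1 / 2) * (∫ x in (-1 : ℝ)..1, (ψ.derivative.eval x) ^ 2)
              - ψ.derivative.eval 1 * ψ.eval 1 + (γ / 2) * (N : ℝ) ^ 2 * (ψ.eval 1) ^ 2
            ≥ c * ((∫ x in (-1 : ℝ)..1, (z x) ^ 2)
                + ∫ x in (-1 : ℝ)..1, (ψ.derivative.eval x) ^ 2) := by
  intro γ hγ
  refine ⟨(2 * γ - 1) / (4 * γ), div_pos (by linarith) (by linarith), ?_⟩
  intro N hN ψ hψ _ z _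
  have hψ' : (derivative ψ).degree < N := by
    rcases eq_or_ne ψ 0 with rfl | hψ0
    · simp
    · exact (degree_derivative_lt hψ0).trans_le hψ
  exact energy_lower_bound_of_trace_bound hγ (by positivity)
    (intervalIntegral.integral_nonneg (by norm_num) fun x _ ↦ sq_nonneg (z x))
    (by simpa using sq_eval_one_le_of_degree_lt hψ')
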